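/- arXiv:2501.12888 — 2 statements merged into one kernel-verified Lean document; each statement's English description precedes it below -/
import Mathlib

section
/- Let X be a CW complex with skeleta X^n, Y a space, and f, g : X^n → Y two cellular maps with f|_{X^{n-1}} = g|_{X^{n-1}}. For each n-cell σ of X with characteristic map Φ_σ : D^n → X, the map on S^n obtained by gluing f∘Φ_σ and g∘Φ_σ along their common boundary restriction defines an element d^n(f,g)(σ) ∈ π_n(Y). If f and g are homotopic relative to X^{n-1}, then d^n(f,g)(σ) = 0 for every n-cell σ. -/
/-!
On the upper hemisphere the glued map is `f ∘ Φ`, on the lower one `g ∘ Φ`. Running the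
homotopy `g ≃ f` rel `A` on the lower hemisphere only is continuous, because the equator is sent
by `Φ` into `A`, where the homotopy is stationary. This deforms the glued map into `f ∘ Φ ∘ π`,
with `π` the projection of the sphere onto the disk, and that map factors through the contractible
space `ℝⁿ`.
-/

open Metric

def dropLast (n : ℕ) (z : EuclideanSpace ℝ (Fin (n + 1))) : EuclideanSpace ℝ (Fin n) :=
  WithLp.toLp 2 (fun i : Fin n => z i.castSucc)

lemma continuous_dropLast (n : ℕ) : Continuous (dropLast n) := by
  unfold dropLast
  fun_prop

lemma norm_dropLast_sq_add_sq_last (n : ℕ) (z : EuclideanSpace ℝ (Fin (n + 1))) :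
    ‖dropLast n z‖ ^ 2 + z (Fin.last n) ^ 2 = ‖z‖ ^ 2 := by
  simp [EuclideanSpace.norm_sq_eq, Fin.sum_univ_castSucc, dropLast]

lemma norm_dropLast_of_last_eq_zero (n : ℕ) {z : EuclideanSpace ℝ (Fin (n + 1))}
    (hz : z (Fin.last n) = 0) : ‖dropLast n z‖ = ‖z‖ := by
  have h := norm_dropLast_sq_add_sq_last n z
  rw [hz] at h
  exact (pow_left_inj₀ (norm_nonneg _) (norm_nonneg _) two_ne_zero).1 (by simpa using h)

namespace ContinuousMap

variable {X Y Z : Type*} [TopologicalSpace X] [TopologicalSpace Y] [TopologicalSpace Z]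

lemma nullhomotopic_of_contractibleSpace [ContractibleSpace Y] (f : C(X, Y)) :
    f.Nullhomotopic := by
  simpa using (id_nullhomotopic Y).comp_left f

lemma Homotopic.nullhomotopic {f g : C(X, Y)} (h : f.Homotopic g) (hg : g.Nullhomotopic) :
    f.Nullhomotopic :=
  let ⟨y, hy⟩ := hg
  ⟨y, h.trans hy⟩

lemma HomotopyRel.homotopic_comp_of_glued {A : Set X} {f g : C(X, Y)} (H : g.HomotopyRel f A)
    (p : C(Z, X)) (s : C(Z, ℝ)) (hp : ∀ z, s z = 0 → p z ∈ A) {k : C(Z, Y)}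
    (hk₁ : ∀ z, 0 ≤ s z → k z = f (p z)) (hk₂ : ∀ z, s z ≤ 0 → k z = g (p z)) :
    k.Homotopic (f.comp p) := by
  refine ⟨{
    toFun := fun x => if 0 ≤ s x.2 then f (p x.2) else H (x.1, p x.2)
    continuous_toFun := ?_
    map_zero_left := fun z => ?_
    map_one_left := fun z => ?_ }⟩
  · refine Continuous.if_le (by fun_prop) (by fun_prop) continuous_const (by fun_prop) ?_
    intro x hx
    rw [H.eq_snd _ (hp _ hx.symm)]
  · by_cases hz : 0 ≤ s z
    · simp [hz, hk₁ z hz]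
    · simp [hz, hk₂ z (le_of_not_ge hz)]
  · by_cases hz : 0 ≤ s z <;> simp [hz]

end ContinuousMap

theorem stmt_11_general (n : ℕ) (X Y : Type) [TopologicalSpace X] [TopologicalSpace Y]
    (A : Set X) (f g : C(X, Y))
    (Φ : C(EuclideanSpace ℝ (Fin n), X))
    (hΦ : ∀ x : EuclideanSpace ℝ (Fin n), ‖x‖ = 1 → Φ x ∈ A)
    (k : C(sphere (0 : EuclideanSpace ℝ (Fin (n + 1))) 1, Y))
    (hk₁ : ∀ z : sphere (0 : EuclideanSpace ℝ (Fin (n + 1))) 1,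
      0 ≤ (z : EuclideanSpace ℝ (Fin (n + 1))) (Fin.last n) → k z = f (Φ (dropLast n z)))
    (hk₂ : ∀ z : sphere (0 : EuclideanSpace ℝ (Fin (n + 1))) 1,
      (z : EuclideanSpace ℝ (Fin (n + 1))) (Fin.last n) ≤ 0 → k z = g (Φ (dropLast n z)))
    (hrel : Nonempty (ContinuousMap.HomotopyRel f g A)) :
    ∃ y : Y, k.Homotopic (ContinuousMap.const _ y) := by
  obtain ⟨H⟩ := hrel
  let π : C(sphere (0 : EuclideanSpace ℝ (Fin (n + 1))) 1, EuclideanSpace ℝ (Fin n)) :=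
    ⟨fun z => dropLast n z, (continuous_dropLast n).comp continuous_subtype_val⟩
  let height : C(sphere (0 : EuclideanSpace ℝ (Fin (n + 1))) 1, ℝ) :=
    ⟨fun z => (z : EuclideanSpace ℝ (Fin (n + 1))) (Fin.last n), by fun_prop⟩
  have hequator : ∀ z, height z = 0 → Φ (π z) ∈ A := fun z hz =>
    hΦ _ ((norm_dropLast_of_last_eq_zero n hz).trans (norm_eq_of_mem_sphere z))
  have hk : k.Homotopic (f.comp (Φ.comp π)) :=
    H.symm.homotopic_comp_of_glued (Φ.comp π) height hequator hk₁ hk₂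
  exact hk.nullhomotopic (π.nullhomotopic_of_contractibleSpace.comp_right (f.comp Φ))

/-- let `f, g : X → Y` agree on `A` (playing the role of `X^{n-1}`), let
`Φ` be the characteristic map of an `n`-cell `σ` with attaching sphere mapped into `A`,
and let `k : Sⁿ → Y` be the map obtained by gluing `f∘Φ` (upper hemisphere) and `g∘Φ`
(lower hemisphere), representing `dⁿ(f,g)(σ) ∈ πₙ(Y)`. If `f` and `g` are homotopic
relative to `A`, then `k` is null-homotopic, i.e. `dⁿ(f,g)(σ) = 0`. -/
theorem stmt_11 (n : ℕ) (X Y : Type) [TopologicalSpace X] [TopologicalSpace Y]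
    (A : Set X) (f g : C(X, Y)) (hfg : ∀ a ∈ A, f a = g a)
    (Φ : C(EuclideanSpace ℝ (Fin n), X))
    (hΦ : ∀ x : EuclideanSpace ℝ (Fin n), ‖x‖ = 1 → Φ x ∈ A)
    (k : C(sphere (0 : EuclideanSpace ℝ (Fin (n + 1))) 1, Y))
    (hk₁ : ∀ z : sphere (0 : EuclideanSpace ℝ (Fin (n + 1))) 1,
      0 ≤ (z : EuclideanSpace ℝ (Fin (n + 1))) (Fin.last n) → k z = f (Φ (dropLast n z)))
    (hk₂ : ∀ z : sphere (0 : EuclideanSpace ℝ (Fin (n + 1))) 1,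
      (z : EuclideanSpace ℝ (Fin (n + 1))) (Fin.last n) ≤ 0 → k z = g (Φ (dropLast n z)))
    (hrel : Nonempty (ContinuousMap.HomotopyRel f g A)) :
    ∃ y : Y, k.Homotopic (ContinuousMap.const _ y) :=
  stmt_11_general n X Y A f g Φ hΦ k hk₁ hk₂ hrel
end

section
/- Let K and L be simplicial complexes and f : dom(K) → dom(L) a simplicial map. Suppose every compact subset of |L| meets only finitely many closed simplices, each of which is compact, and suppose that for every simplex τ of L the preimage {σ ∈ K : f(σ) ⊆ τ} is finite. Then |f| : |K| → |L| is a proper map (preimages of compact sets are compact). In particular, a simplicial map between locally finite countable complexes such that each vertex of L has finite preimage induces a proper map of geometric realizations. -/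
/-- An abstract simplicial complex on a vertex type `V`. -/
structure AbsSimplicialComplex (V : Type) where
  faces : Set (Finset V)
  down_closed : ∀ ⦃s⦄, s ∈ faces → ∀ ⦃t⦄, t ⊆ s → t ∈ faces

/-- The geometric realization `|K| ⊆ ℝ^ℕ` of a countable simplicial complex with
vertices in `ℕ`. -/
def geomRealization (K : AbsSimplicialComplex ℕ) : Set (ℕ → ℝ) :=
  {x | (∀ i, 0 ≤ x i) ∧ ∃ σ ∈ K.faces, (∀ i, x i ≠ 0 → i ∈ σ) ∧ ∑ i ∈ σ, x i = 1}

/-- The closed simplex `|τ| ⊆ |L|` spanned by a face `τ`. -/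
def closedSimplex (L : AbsSimplicialComplex ℕ) (τ : Finset ℕ) : Set (ℕ → ℝ) :=
  {x ∈ geomRealization L | ∀ i, x i ≠ 0 → i ∈ τ}

/-- The map `ℝ^ℕ → ℝ^ℕ` induced by a vertex map `f : ℕ → ℕ`. -/
noncomputable def geomRealMap (f : ℕ → ℕ) (x : ℕ → ℝ) : ℕ → ℝ :=
  fun j => ∑ᶠ i ∈ {i | f i = j}, x i

/-! A compact `Q ⊆ |L|` meets only finitely many closed simplices `|τ|`, and only finitely many
simplices `σ` of `K` map into these. A point of `|K|` lying over `Q` lies in some `|σ|` with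
`|f|(|σ|) ⊆ |f(σ)|`, so `f(σ)` is one of these `τ`: the preimage of `Q` is a closed subset of the
compact union of those finitely many `|σ|`. -/

open Set

theorem Set.MapsTo.image_val_preimage_restrict {α β : Type*} {f : α → β} {s : Set α}
    {t : Set β} (h : MapsTo f s t) (Q : Set t) :
    Subtype.val '' (h.restrict f s t ⁻¹' Q) = s ∩ f ⁻¹' (Subtype.val '' Q) := by
  ext x
  simp only [mem_image, mem_preimage, MapsTo.restrict, Subtype.map, mem_inter_iff]
  constructor
  · rintro ⟨⟨x, hx⟩, hQ, rfl⟩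
    exact ⟨hx, _, hQ, rfl⟩
  · rintro ⟨hx, y, hy, hyx⟩
    exact ⟨⟨x, hx⟩, by convert hy using 1; exact Subtype.ext hyx.symm, rfl⟩

theorem Set.MapsTo.isProperMap_restrict {X Y : Type*} [TopologicalSpace X] [TopologicalSpace Y]
    {f : X → Y} {s : Set X} {t : Set Y} [T2Space t] [CompactlyCoherentSpace t]
    (hmaps : MapsTo f s t) (hcont : ContinuousOn f s)
    (hcpt : ∀ Q ⊆ t, IsCompact Q → IsCompact (s ∩ f ⁻¹' Q)) :
    IsProperMap (hmaps.restrict f s t) := by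
  refine isProperMap_iff_isCompact_preimage.2 ⟨hcont.mapsToRestrict hmaps, fun Q hQ => ?_⟩
  rw [Subtype.isCompact_iff, hmaps.image_val_preimage_restrict]
  exact hcpt _ (Subtype.coe_image_subset t Q) (hQ.image continuous_subtype_val)

theorem sum_eq_sum_of_support_subset {α M : Type*} [AddCommMonoid M] {x : α → M}
    {a b : Finset α}
    (ha : ∀ i, x i ≠ 0 → i ∈ a) (hb : ∀ i, x i ≠ 0 → i ∈ b) :
    ∑ i ∈ a, x i = ∑ i ∈ b, x i :=
  (finsum_eq_finsetSum_of_support_subset x ha).symm.trans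
    (finsum_eq_finsetSum_of_support_subset x hb)

theorem geomRealization_eq_biUnion_closedSimplex (K : AbsSimplicialComplex ℕ) :
    geomRealization K = ⋃ σ ∈ K.faces, closedSimplex K σ := by
  ext x
  simp only [mem_iUnion, exists_prop]
  constructor
  · intro hx
    obtain ⟨-, σ, hσ, hsupp, -⟩ := id hx
    exact ⟨σ, hσ, hx, hsupp⟩
  · rintro ⟨σ, -, hx, -⟩
    exact hx

section Realization

variable {K L : AbsSimplicialComplex ℕ} {f : ℕ → ℕ}

theorem closedSimplex_eq {σ : Finset ℕ} (hσ : σ ∈ K.faces) :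
    closedSimplex K σ = {x | (∀ i, 0 ≤ x i) ∧ (∀ i ∉ σ, x i = 0) ∧ ∑ i ∈ σ, x i = 1} := by
  ext x
  simp only [closedSimplex, geomRealization, mem_ofPred_eq, not_imp_comm (a := _ ∈ σ)]
  constructor
  · rintro ⟨⟨hpos, τ, -, hτ, hsum⟩, hsupp⟩
    exact ⟨hpos, hsupp, (sum_eq_sum_of_support_subset hsupp hτ).trans hsum⟩
  · rintro ⟨hpos, hsupp, hsum⟩
    exact ⟨⟨hpos, σ, hσ, hsupp, hsum⟩, hsupp⟩

theorem isCompact_closedSimplex {σ : Finset ℕ} (hσ : σ ∈ K.faces) :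
    IsCompact (closedSimplex K σ) := by
  have hclosed :
      IsClosed {x : ℕ → ℝ | (∀ i, 0 ≤ x i) ∧ (∀ i ∉ σ, x i = 0) ∧ ∑ i ∈ σ, x i = 1} := by
    simp only [ofPred_and, ofPred_forall]
    refine (isClosed_iInter fun i => isClosed_le continuous_const (continuous_apply i)).inter
      ((isClosed_biInter fun i _ => isClosed_eq (continuous_apply i) continuous_const).inter
      (isClosed_eq (continuous_finsetSum σ fun i _ => continuous_apply i) continuous_const))
  rw [closedSimplex_eq hσ]
  refine (isCompact_univ_pi fun _ => isCompact_Icc (a := (0 : ℝ)) (b := 1)).of_isClosed_subset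
    hclosed ?_
  rintro x ⟨hpos, hsupp, hsum⟩ i -
  refine ⟨hpos i, ?_⟩
  by_cases hi : i ∈ σ
  · exact hsum ▸ Finset.single_le_sum (fun j _ => hpos j) hi
  · exact (hsupp i hi).trans_le zero_le_one

theorem geomRealMap_mem_closedSimplex_image
    (hmaps : MapsTo (geomRealMap f) (geomRealization K) (geomRealization L)) {σ : Finset ℕ}
    {x : ℕ → ℝ} (hx : x ∈ closedSimplex K σ) :
    geomRealMap f x ∈ closedSimplex L (σ.image f) := by
  refine ⟨hmaps hx.1, fun j hj => ?_⟩
  by_contra hjσ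
  refine hj (finsum_mem_of_eqOn_zero fun i hi => ?_)
  by_contra hxi
  exact hjσ (Finset.mem_image.2 ⟨i, hx.2 i hxi, hi⟩)

theorem preimage_subset_biUnion_closedSimplex (hf : ∀ σ ∈ K.faces, σ.image f ∈ L.faces)
    (hmaps : MapsTo (geomRealMap f) (geomRealization K) (geomRealization L)) (Q : Set (ℕ → ℝ)) :
    geomRealization K ∩ geomRealMap f ⁻¹' Q ⊆
      ⋃ σ ∈ ⋃ τ ∈ {τ ∈ L.faces | (closedSimplex L τ ∩ Q).Nonempty},
        {σ ∈ K.faces | σ.image f ⊆ τ}, closedSimplex K σ := by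
  rintro x ⟨hxK, hxQ⟩
  rw [geomRealization_eq_biUnion_closedSimplex] at hxK
  obtain ⟨σ, hσ, hxσ⟩ := mem_iUnion₂.1 hxK
  have hτ : (closedSimplex L (σ.image f) ∩ Q).Nonempty :=
    ⟨_, geomRealMap_mem_closedSimplex_image hmaps hxσ, hxQ⟩
  exact mem_iUnion₂.2 ⟨σ, mem_iUnion₂.2 ⟨_, ⟨hf σ hσ, hτ⟩, hσ, subset_rfl⟩, hxσ⟩

theorem isCompact_geomRealization_inter_preimage (hf : ∀ σ ∈ K.faces, σ.image f ∈ L.faces)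
    (hmaps : MapsTo (geomRealMap f) (geomRealization K) (geomRealization L))
    (hcont : ContinuousOn (geomRealMap f) (geomRealization K))
    (hfin : ∀ Q : Set (ℕ → ℝ), Q ⊆ geomRealization L → IsCompact Q →
      {τ ∈ L.faces | (closedSimplex L τ ∩ Q).Nonempty}.Finite)
    (hpre : ∀ τ ∈ L.faces, {σ ∈ K.faces | σ.image f ⊆ τ}.Finite)
    {Q : Set (ℕ → ℝ)} (hQL : Q ⊆ geomRealization L) (hQ : IsCompact Q) :
    IsCompact (geomRealization K ∩ geomRealMap f ⁻¹' Q) := by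
  set S := ⋃ τ ∈ {τ ∈ L.faces | (closedSimplex L τ ∩ Q).Nonempty},
    {σ ∈ K.faces | σ.image f ⊆ τ}
  have hS : S.Finite := (hfin Q hQL hQ).biUnion fun τ hτ => hpre τ hτ.1
  have hSK : S ⊆ K.faces := iUnion₂_subset fun _ _ => sep_subset _ _
  set C := ⋃ σ ∈ S, closedSimplex K σ
  have hC : IsCompact C := hS.isCompact_biUnion fun σ hσ => isCompact_closedSimplex (hSK hσ)
  have hCK : C ⊆ geomRealization K := iUnion₂_subset fun _ _ => sep_subset _ _
  have heq : geomRealization K ∩ geomRealMap f ⁻¹' Q = C ∩ geomRealMap f ⁻¹' Q :=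
    Subset.antisymm
      (fun x hx => ⟨preimage_subset_biUnion_closedSimplex hf hmaps Q hx, hx.2⟩)
      (inter_subset_inter_left _ hCK)
  rw [heq]
  exact hC.of_isClosed_subset
    ((hcont.mono hCK).preimage_isClosed_of_isClosed hC.isClosed hQ.isClosed) inter_subset_left

end Realization

theorem stmt_19_general (K L : AbsSimplicialComplex ℕ) (f : ℕ → ℕ)
    (hf : ∀ σ ∈ K.faces, σ.image f ∈ L.faces)
    (hmaps : Set.MapsTo (geomRealMap f) (geomRealization K) (geomRealization L))
    (hcont : ContinuousOn (geomRealMap f) (geomRealization K))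
    (hfin : ∀ Q : Set (ℕ → ℝ), Q ⊆ geomRealization L → IsCompact Q →
      {τ ∈ L.faces | (closedSimplex L τ ∩ Q).Nonempty}.Finite)
    (hpre : ∀ τ ∈ L.faces, {σ ∈ K.faces | σ.image f ⊆ τ}.Finite) :
    IsProperMap (hmaps.restrict (geomRealMap f) (geomRealization K) (geomRealization L)) :=
  hmaps.isProperMap_restrict hcont fun _ hQL hQ =>
    isCompact_geomRealization_inter_preimage hf hmaps hcont hfin hpre hQL hQ

/-- if every compact subset of `|L|` meets only finitely many closed
simplices, each closed simplex of `|L|` is compact, and every simplex `τ` of `L` has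
only finitely many simplices of `K` mapping into it, then the geometric realization
`|f| : |K| → |L|` of a simplicial map `f` is proper. -/
theorem stmt_19 (K L : AbsSimplicialComplex ℕ) (f : ℕ → ℕ)
    (hf : ∀ σ ∈ K.faces, σ.image f ∈ L.faces)
    (hmaps : Set.MapsTo (geomRealMap f) (geomRealization K) (geomRealization L))
    (hcont : ContinuousOn (geomRealMap f) (geomRealization K))
    (hcpt : ∀ τ ∈ L.faces, IsCompact (closedSimplex L τ))
    (hfin : ∀ Q : Set (ℕ → ℝ), Q ⊆ geomRealization L → IsCompact Q →
      {τ ∈ L.faces | (closedSimplex L τ ∩ Q).Nonempty}.Finite)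
    (hpre : ∀ τ ∈ L.faces, {σ ∈ K.faces | σ.image f ⊆ τ}.Finite) :
    IsProperMap (hmaps.restrict (geomRealMap f) (geomRealization K) (geomRealization L)) :=
  stmt_19_general K L f hf hmaps hcont hfin hpre
end
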